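/- Let w ∈ S_{[a,n]} be decreasing on the interval (k,n] (meaning w(i) > w(i') whenever k < i < i' ≤ n). If u →^k w, i.e., there is an increasing k-chain from u to w, then u is also decreasing on (k,n]. -/

import Mathlib

/-- `w` has finitely many non-fixed points. -/
def FinSupp (w : Equiv.Perm ℤ) : Prop := {i : ℤ | w i ≠ i}.Finite

/-- Descent set of a permutation of ℤ. -/
def Des (w : Equiv.Perm ℤ) : Set ℤ := {i : ℤ | w (i + 1) < w i}

/-- Number of inversions. -/
noncomputable def permLength (w : Equiv.Perm ℤ) : ℕ :=
  {p : ℤ × ℤ | p.1 < p.2 ∧ w p.2 < w p.1}.ncard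

/-- Membership in `S_{[a,n]}`: all non-fixed points lie in `[a,n]`. -/
def InS (a n : ℤ) (w : Equiv.Perm ℤ) : Prop := ∀ i : ℤ, w i ≠ i → a ≤ i ∧ i ≤ n

/-- Cover relation of the `k`-Bruhat order. -/
def BCover (k : ℤ) (u w : Equiv.Perm ℤ) : Prop :=
  ∃ i j : ℤ, i ≤ k ∧ k < j ∧ w = u * Equiv.swap i j ∧
    permLength w = permLength u + 1

/-- The `k`-Bruhat order: reflexive-transitive closure of the cover relation. -/
def kBruhat (k : ℤ) : Equiv.Perm ℤ → Equiv.Perm ℤ → Prop :=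
  Relation.ReflTransGen (BCover k)

/-- There is an increasing `k`-chain from `u` to `w`. -/
def IncTo (k : ℤ) (u w : Equiv.Perm ℤ) : Prop :=
  ∃ (m : ℕ) (us : ℕ → Equiv.Perm ℤ) (ab : ℕ → ℤ × ℤ),
    us 0 = u ∧ us m = w ∧
    (∀ i < m, (ab i).1 ≤ k ∧ k < (ab i).2 ∧
      us (i + 1) = us i * Equiv.swap (ab i).1 (ab i).2 ∧
      permLength (us (i + 1)) = permLength (us i) + 1) ∧
    (∀ i j : ℕ, i < j → j < m → us i (ab i).1 < us j (ab j).1)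

/-- `fix_{(lo,hi]}(u,w) = {u(t) : lo < t ≤ hi, u(t) = w(t)}`. -/
def fixSet (lo hi : ℤ) (u w : Equiv.Perm ℤ) : Set ℤ :=
  {m : ℤ | ∃ t : ℤ, lo < t ∧ t ≤ hi ∧ u t = m ∧ w t = m}

/-!
The transposition `(a b)`, `a < b`, reverses exactly the pairs `(a, t)`, `(t, b)` for `a < t < b`
and `(a, b)`, and sorting images under `(a b)` identifies the inversions of `u * (a b)` with the
symmetric difference of the inversions of `u` and of `(a b)`. So if the length goes up by one, the
reversed pairs hold exactly one more non-inversion of `u` than inversions; exchanging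
`(a, t) ↔ (t, b)` then shows `u a < u b` and that no `t ∈ (a, b)` has `u a < u t < u b`.
If `v = u * (a b)` with `a ≤ k < b` is decreasing on `(k, n]`, then on `(k, n]` the permutation `u`
differs from `v` at most at `b`, where `u b > u a = v b`, and the empty window `(u a, u b)` keeps
`u` decreasing. Induct backwards along the chain.
-/

open Set Equiv
open scoped symmDiff

def inversions (w : Perm ℤ) : Set (ℤ × ℤ) := {p | p.1 < p.2 ∧ w p.2 < w p.1}

lemma permLength_eq_ncard_inversions (w : Perm ℤ) : permLength w = (inversions w).ncard := rfl

def sortedImage (s : Perm ℤ) (p : ℤ × ℤ) : ℤ × ℤ := (min (s p.1) (s p.2), max (s p.1) (s p.2))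

lemma sortedImage_inv_sortedImage (s : Perm ℤ) {p : ℤ × ℤ} (hp : p.1 ≤ p.2) :
    sortedImage s⁻¹ (sortedImage s p) = p := by
  obtain ⟨x, y⟩ := p
  rcases le_total (s x) (s y) with h | h <;> simp [sortedImage, h, hp]

lemma sortedImage_fst_lt_snd (s : Perm ℤ) {p : ℤ × ℤ} (hp : p.1 ≠ p.2) :
    (sortedImage s p).1 < (sortedImage s p).2 := by
  simpa [sortedImage, eq_comm] using s.injective.ne hp

lemma mem_inversions_mul_iff (u s : Perm ℤ) {p : ℤ × ℤ} (hp : p.1 < p.2) :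
    p ∈ inversions (u * s) ↔ sortedImage s p ∈ inversions u ∆ inversions s⁻¹ := by
  obtain ⟨x, y⟩ := p
  dsimp only at hp
  rcases lt_or_gt_of_ne (s.injective.ne hp.ne) with h | h
  · simp [inversions, sortedImage, mem_symmDiff, h, h.le, hp, hp.le]
  · simpa [inversions, sortedImage, mem_symmDiff, h, h.le, hp, hp.le] using
      (u.injective.ne h.ne).le_iff_lt.symm

lemma fst_lt_snd_of_mem_symmDiff_inversions {u s : Perm ℤ} {q : ℤ × ℤ}
    (hq : q ∈ inversions u ∆ inversions s) : q.1 < q.2 := by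
  rcases hq with ⟨hq, -⟩ | ⟨hq, -⟩ <;> exact hq.1

lemma bijOn_sortedImage_inversions_mul (u s : Perm ℤ) :
    BijOn (sortedImage s) (inversions (u * s)) (inversions u ∆ inversions s⁻¹) := by
  have hinv : ∀ q ∈ inversions u ∆ inversions s⁻¹, sortedImage s (sortedImage s⁻¹ q) = q :=
    fun q hq => by
      simpa using sortedImage_inv_sortedImage s⁻¹ (fst_lt_snd_of_mem_symmDiff_inversions hq).le
  refine InvOn.bijOn (f' := sortedImage s⁻¹)
    ⟨fun p hp => sortedImage_inv_sortedImage s hp.1.le, hinv⟩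
    (fun p hp => (mem_inversions_mul_iff u s hp.1).1 hp) (fun q hq => ?_)
  have hlt := sortedImage_fst_lt_snd s⁻¹ (fst_lt_snd_of_mem_symmDiff_inversions hq).ne
  rw [mem_inversions_mul_iff u s hlt, hinv q hq]
  exact hq

lemma ncard_inversions_sdiff_eq_succ {u s : Perm ℤ} (hs : (inversions s⁻¹).Finite)
    (h : permLength (u * s) = permLength u + 1) :
    (inversions s⁻¹ \ inversions u).ncard = (inversions s⁻¹ ∩ inversions u).ncard + 1 := by
  set I := inversions u
  set D := inversions s⁻¹
  have hsymm : permLength (u * s) = (I ∆ D).ncard := (bijOn_sortedImage_inversions_mul u s).ncard_eq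
  -- `ncard` vanishes on infinite sets, so the length increase forces `I` to be finite
  have hI : I.Finite := by
    by_contra hI
    have : (I ∆ D).Infinite := ((Set.Infinite.sdiff hI hs).mono subset_union_left)
    rw [hsymm, this.ncard, permLength_eq_ncard_inversions, Set.Infinite.ncard hI] at h
    omega
  have hsplit : (I ∆ D).ncard = (I \ D).ncard + (D \ I).ncard :=
    ncard_union_eq disjoint_sdiff_sdiff hI.sdiff hs.sdiff
  have hI_split := ncard_inter_add_ncard_sdiff_eq_ncard I D hI
  rw [inter_comm] at hI_split
  have hu : permLength u = I.ncard := permLength_eq_ncard_inversions u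
  omega

lemma mem_inversions_swap_iff {a b : ℤ} (hab : a < b) {p : ℤ × ℤ} :
    p ∈ inversions (swap a b) ↔
      (p.1 = a ∧ a < p.2 ∧ p.2 ≤ b) ∨ (p.2 = b ∧ a ≤ p.1 ∧ p.1 < b) := by
  obtain ⟨x, y⟩ := p
  simp only [inversions, mem_ofPred_eq, swap_apply_def]
  split_ifs <;> omega

lemma finite_inversions_swap (a b : ℤ) : (inversions (swap a b)).Finite := by
  have key : ∀ a b : ℤ, a < b → (inversions (swap a b)).Finite := fun a b hab =>
    ((finite_Icc a b).prod (finite_Icc a b)).subset fun p hp => by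
      rw [mem_inversions_swap_iff hab] at hp
      simp only [mem_prod, mem_Icc]
      omega
  rcases lt_trichotomy a b with hab | rfl | hab
  · exact key a b hab
  · convert finite_empty
    ext ⟨x, y⟩
    simp [inversions]
    omega
  · exact swap_comm a b ▸ key b a hab

lemma apply_lt_apply_of_notMem_inversions {u : Perm ℤ} {x y : ℤ} (hxy : x < y)
    (h : (x, y) ∉ inversions u) : u x < u y :=
  (not_lt.1 fun h' => h ⟨hxy, h'⟩).lt_of_ne (u.injective.ne hxy.ne)

-- on the pairs reversed by `swap a b`, exchanges `(a, t)` and `(t, b)`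
def flipPair (a b : ℤ) (p : ℤ × ℤ) : ℤ × ℤ := if p.1 = a then (p.2, b) else (a, p.1)

lemma flipPair_injOn {a b : ℤ} (hab : a < b) : InjOn (flipPair a b) (inversions (swap a b)) := by
  rintro ⟨x, y⟩ hp ⟨x', y'⟩ hp' h
  rw [mem_inversions_swap_iff hab] at hp hp'
  simp only [flipPair] at h
  split_ifs at h <;> simp only [Prod.mk.injEq] at h ⊢ <;> omega

lemma apply_lt_apply_of_permLength_mul_swap {u : Perm ℤ} {a b : ℤ} (hab : a < b)
    (h : permLength (u * swap a b) = permLength u + 1) : u a < u b := by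
  by_contra! hba
  replace hba : u b < u a := hba.lt_of_ne (u.injective.ne hab.ne')
  have hD := finite_inversions_swap a b
  have hcount := ncard_inversions_sdiff_eq_succ (by simpa using hD) h
  rw [swap_inv] at hcount
  have hmaps : ∀ p ∈ inversions (swap a b) \ inversions u,
      flipPair a b p ∈ (inversions (swap a b) ∩ inversions u) \ {(a, b)} := by
    rintro ⟨x, y⟩ ⟨hp, hpu⟩
    have hp' := (mem_inversions_swap_iff hab).1 hp
    dsimp only at hp'
    rcases hp' with ⟨rfl, hxy, hyb⟩ | ⟨rfl, hax, hxb⟩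
    · have hay := apply_lt_apply_of_notMem_inversions hxy hpu
      replace hyb : y < b := hyb.lt_of_ne (by rintro rfl; exact hba.not_gt hay)
      simp only [flipPair]
      exact ⟨⟨(mem_inversions_swap_iff hab).2 (Or.inr ⟨rfl, hxy.le, hyb⟩), hyb, hba.trans hay⟩,
        by simp [hxy.ne']⟩
    · have hxb' := apply_lt_apply_of_notMem_inversions hxb hpu
      have hxa : x ≠ a := by rintro rfl; exact hba.not_gt hxb'
      simp only [flipPair, if_neg hxa]
      exact ⟨⟨(mem_inversions_swap_iff hab).2 (Or.inl ⟨rfl, hax.lt_of_ne' hxa, hxb.le⟩),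
        hax.lt_of_ne' hxa, hxb'.trans hba⟩, by simp [hxb.ne]⟩
  have hle := ncard_le_ncard_of_injOn _ hmaps ((flipPair_injOn hab).mono sdiff_subset)
    (hD.inter_of_left _).sdiff
  have hab_mem : (a, b) ∈ inversions (swap a b) ∩ inversions u :=
    ⟨(mem_inversions_swap_iff hab).2 (Or.inl ⟨rfl, hab, le_rfl⟩), hab, hba⟩
  have hlt := ncard_sdiff_singleton_lt_of_mem hab_mem (hD.inter_of_left _)
  omega

lemma not_between_of_permLength_mul_swap {u : Perm ℤ} {a b t : ℤ} (hat : a < t) (htb : t < b)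
    (h : permLength (u * swap a b) = permLength u + 1) : ¬(u a < u t ∧ u t < u b) := by
  rintro ⟨hlo, hhi⟩
  have hab := hat.trans htb
  have hD := finite_inversions_swap a b
  have hcount := ncard_inversions_sdiff_eq_succ (by simpa using hD) h
  rw [swap_inv] at hcount
  set T : Set (ℤ × ℤ) := {(a, b), (a, t), (t, b)}
  have hT : T.ncard = 3 := ncard_eq_three.2 ⟨_, _, _, by simp [htb.ne'], by simp [hat.ne],
    by simp [hat.ne], rfl⟩
  have hTsub : T ⊆ inversions (swap a b) \ inversions u := by
    rintro p (rfl | rfl | rfl)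
    · exact ⟨(mem_inversions_swap_iff hab).2 (Or.inl ⟨rfl, hab, le_rfl⟩),
        fun hp => hp.2.not_gt (hlo.trans hhi)⟩
    · exact ⟨(mem_inversions_swap_iff hab).2 (Or.inl ⟨rfl, hat, htb.le⟩),
        fun hp => hp.2.not_gt hlo⟩
    · exact ⟨(mem_inversions_swap_iff hab).2 (Or.inr ⟨rfl, hat.le, htb⟩),
        fun hp => hp.2.not_gt hhi⟩
  have hmaps : ∀ p ∈ inversions (swap a b) ∩ inversions u,
      flipPair a b p ∈ (inversions (swap a b) \ inversions u) \ T := by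
    rintro ⟨x, y⟩ ⟨hp, hxy, hyx⟩
    have hp' := (mem_inversions_swap_iff hab).1 hp
    dsimp only at hp' hxy hyx
    rcases hp' with ⟨rfl, -, hyb⟩ | ⟨rfl, hax, hxb⟩
    · replace hyb : y < b := hyb.lt_of_ne (by rintro rfl; exact hyx.not_gt (hlo.trans hhi))
      have hyt : y ≠ t := by rintro rfl; exact hyx.not_gt hlo
      simp only [flipPair]
      refine ⟨⟨(mem_inversions_swap_iff hab).2 (Or.inr ⟨rfl, hxy.le, hyb⟩),
        fun hp => hp.2.not_gt (hyx.trans (hlo.trans hhi))⟩, ?_⟩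
      simp [T, hxy.ne', htb.ne', hyt]
    · have hxa : x ≠ a := by rintro rfl; exact hyx.not_gt (hlo.trans hhi)
      have hxt : x ≠ t := by rintro rfl; exact hyx.not_gt hhi
      simp only [flipPair, if_neg hxa]
      refine ⟨⟨(mem_inversions_swap_iff hab).2 (Or.inl ⟨rfl, hax.lt_of_ne' hxa, hxb.le⟩),
        fun hp => hp.2.not_gt ((hlo.trans hhi).trans hyx)⟩, ?_⟩
      simp [T, hxb.ne, hxt, hat.ne]
  have hle := ncard_le_ncard_of_injOn _ hmaps ((flipPair_injOn hab).mono inter_subset_left)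
    hD.sdiff.sdiff
  have hsplit := ncard_sdiff_add_ncard_of_subset hTsub hD.sdiff
  omega

lemma strictAntiOn_Ioc_of_permLength_mul_swap {u : Perm ℤ} {a b k n : ℤ} (hak : a ≤ k)
    (hkb : k < b) (h : permLength (u * swap a b) = permLength u + 1)
    (hv : StrictAntiOn (u * swap a b) (Ioc k n)) : StrictAntiOn u (Ioc k n) := by
  rintro c ⟨hkc, hcn⟩ d ⟨hkd, hdn⟩ hcd
  have hca : c ≠ a := by omega
  have hda : d ≠ a := by omega
  have hvx : ∀ x, x ≠ a → x ≠ b → (u * swap a b) x = u x := fun x hxa hxb => by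
    simp [swap_apply_of_ne_of_ne hxa hxb]
  by_cases hdb : d = b
  · subst hdb
    have hac : u a < u c := by
      simpa [hvx c hca hcd.ne] using hv ⟨hkc, hcn⟩ ⟨hkd, hdn⟩ hcd
    have hnot := not_between_of_permLength_mul_swap (hak.trans_lt hkc) hcd h
    exact (not_lt.1 fun hcd' => hnot ⟨hac, hcd'⟩).lt_of_ne (u.injective.ne hcd.ne')
  · by_cases hcb : c = b
    · subst hcb
      have hdc : u d < u a := by
        simpa [hvx d hda hdb] using hv ⟨hkc, hcn⟩ ⟨hkd, hdn⟩ hcd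
      exact hdc.trans (apply_lt_apply_of_permLength_mul_swap (hak.trans_lt hkb) h)
    · simpa [hvx c hca hcb, hvx d hda hdb] using hv ⟨hkc, hcn⟩ ⟨hkd, hdn⟩ hcd

lemma BCover.strictAntiOn_Ioc {k n : ℤ} {u v : Perm ℤ} (h : BCover k u v)
    (hv : StrictAntiOn v (Ioc k n)) : StrictAntiOn u (Ioc k n) := by
  obtain ⟨a, b, hak, hkb, rfl, hlen⟩ := h
  exact strictAntiOn_Ioc_of_permLength_mul_swap hak hkb hlen hv

lemma kBruhat.strictAntiOn_Ioc {k n : ℤ} {u w : Perm ℤ} (h : kBruhat k u w)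
    (hw : StrictAntiOn w (Ioc k n)) : StrictAntiOn u (Ioc k n) := by
  induction h using Relation.ReflTransGen.head_induction_on with
  | refl => exact hw
  | head hcov _ ih => exact hcov.strictAntiOn_Ioc ih

lemma IncTo.to_kBruhat {k : ℤ} {u w : Perm ℤ} (h : IncTo k u w) : kBruhat k u w := by
  obtain ⟨m, us, ab, rfl, rfl, hstep, -⟩ := h
  suffices ∀ j ≤ m, kBruhat k (us 0) (us j) from this m le_rfl
  intro j hj
  induction j with
  | zero => exact .refl
  | succ j ih =>
    obtain ⟨ha, hb, heq, hlen⟩ := hstep j hj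
    exact (ih (by omega)).tail ⟨_, _, ha, hb, heq, hlen⟩

theorem stmt9_general (n k : ℤ) (u w : Equiv.Perm ℤ)
    (hdec : ∀ i i' : ℤ, k < i → i < i' → i' ≤ n → w i' < w i)
    (h : IncTo k u w) :
    ∀ i i' : ℤ, k < i → i < i' → i' ≤ n → u i' < u i := by
  have hw : StrictAntiOn w (Ioc k n) := fun i hi i' hi' hii' => hdec i i' hi.1 hii' hi'.2
  intro i i' hi hii' hi'n
  exact h.to_kBruhat.strictAntiOn_Ioc hw ⟨hi, hii'.le.trans hi'n⟩ ⟨hi.trans hii', hi'n⟩ hii'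

theorem stmt9 (a n k : ℤ) (u w : Equiv.Perm ℤ) (hw : InS a n w)
    (hdec : ∀ i i' : ℤ, k < i → i < i' → i' ≤ n → w i' < w i)
    (h : IncTo k u w) :
    ∀ i i' : ℤ, k < i → i < i' → i' ≤ n → u i' < u i :=
  stmt9_general n k u w hdec h
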